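/- In Cl_5, for all real numbers μ₁₂, μ₁₃, the element x = μ₁₂ • (e₄*e₁*e₂) + μ₁₃ • (e₅*e₁*e₃) is a unit of Cl_5 if and only if μ₁₂² ≠ μ₁₃². (x is 4× the invariant Dirac operator of the metric nilpotent Lie algebra 𝒩₅,₅ = (0,0,0,12,13) with de⁴ = μ₁₂ e¹², de⁵ = μ₁₃ e¹³; such a metric carries a left-invariant harmonic spinor exactly when μ₁₂ = ±μ₁₃, as asserted in the paper's Theorem on 5-dimensional nilmanifolds.) -/

import Mathlib

/-!
With `A = e₄e₁e₂` and `B = e₅e₁e₃` (1-based indices, so `A = e 3 * e 0 * e 1` here), both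
square to `1` and commute, hence `(μ₁₂A + μ₁₃B)(μ₁₂A - μ₁₃B) = (μ₁₂² - μ₁₃²) • 1` and `x` is
invertible when `μ₁₂² ≠ μ₁₃²`. If `μ₁₃ = ±μ₁₂`, then `x` is a multiple of `A ± B`, which
annihilates `A ∓ B`; and `A ≠ ±B`, since `AB = e₂e₃e₄e₅` anticommutes with `e₂` and so is not `±1`.
-/

open scoped BigOperators

/-- The negative-definite quadratic form `Q v = -∑ i, (v i)^2` on `EuclideanSpace ℝ (Fin n)`. -/
noncomputable def Q (n : ℕ) : QuadraticForm ℝ (EuclideanSpace ℝ (Fin n)) :=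
  QuadraticMap.ofPolar (fun v => -∑ i, v i ^ 2)
    (fun a v => by
      simp only [PiLp.smul_apply, smul_eq_mul, mul_pow]
      rw [← Finset.mul_sum]
      ring)
    (fun x x' y => by
      have h : ∀ (u w : EuclideanSpace ℝ (Fin n)),
          QuadraticMap.polar (fun v : EuclideanSpace ℝ (Fin n) => -∑ i, v i ^ 2) u w
            = -(2 * ∑ i, u i * w i) := by
        intro u w
        have hsq : ∀ i, (u i + w i) ^ 2 = u i ^ 2 + w i ^ 2 + 2 * (u i * w i) := fun i => by ring
        simp_rw [QuadraticMap.polar, PiLp.add_apply, hsq, Finset.sum_add_distrib,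
          ← Finset.mul_sum]
        ring
      simp_rw [h, PiLp.add_apply, add_mul, Finset.sum_add_distrib]
      ring)
    (fun a x y => by
      have h : ∀ (u w : EuclideanSpace ℝ (Fin n)),
          QuadraticMap.polar (fun v : EuclideanSpace ℝ (Fin n) => -∑ i, v i ^ 2) u w
            = -(2 * ∑ i, u i * w i) := by
        intro u w
        have hsq : ∀ i, (u i + w i) ^ 2 = u i ^ 2 + w i ^ 2 + 2 * (u i * w i) := fun i => by ring
        simp_rw [QuadraticMap.polar, PiLp.add_apply, hsq, Finset.sum_add_distrib,
          ← Finset.mul_sum]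
        ring
      simp_rw [h, PiLp.smul_apply, smul_eq_mul, mul_assoc, ← Finset.mul_sum]
      ring)

/-- The image in the Clifford algebra `Cl_n` of the `i`-th standard basis vector. -/
noncomputable def e {n : ℕ} (i : Fin n) : CliffordAlgebra (Q n) :=
  CliffordAlgebra.ι (Q n) (EuclideanSpace.single i 1)

theorem ne_one_of_mul_eq_neg_mul {R : Type*} [Ring R] [CharZero R] {p u : R} (hu : IsUnit u)
    (h : p * u = -(u * p)) : p ≠ 1 := by
  rintro rfl
  rw [mul_one, one_mul, eq_neg_iff_add_eq_zero, ← two_mul] at h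
  exact two_ne_zero (hu.mul_left_eq_zero.mp h)

section CommutingInvolutions

variable {K R : Type*} [Field K] [Ring R] [Algebra K R]

theorem commute_smul_add_smul_smul_sub_smul {a b : R} (hab : Commute a b) (s t : K) :
    Commute (s • a + t • b) (s • a - t • b) := by
  have hst : Commute (s • a) (t • b) := (hab.smul_left s).smul_right t
  exact ((Commute.refl _).sub_right hst).add_left (hst.symm.sub_right (Commute.refl _))

theorem smul_add_smul_mul_smul_sub_smul {a b : R} (ha : a * a = 1) (hb : b * b = 1)
    (hab : Commute a b) (s t : K) :
    (s • a + t • b) * (s • a - t • b) = algebraMap K R (s ^ 2 - t ^ 2) := by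
  rw [Algebra.algebraMap_eq_smul_one, add_mul, mul_sub, mul_sub, smul_mul_smul_comm,
    smul_mul_smul_comm, smul_mul_smul_comm, smul_mul_smul_comm, ha, hb, hab.eq]
  module

theorem isUnit_smul_add_smul_iff {a b : R} (ha : a * a = 1) (hb : b * b = 1)
    (hab : Commute a b) (hne : a ≠ b) (hne' : a ≠ -b) (s t : K) :
    IsUnit (s • a + t • b) ↔ s ^ 2 ≠ t ^ 2 := by
  constructor
  · intro hu hst
    obtain rfl | rfl := sq_eq_sq_iff_eq_or_eq_neg.mp hst
    · have : (s • a + s • b) * (a - b) = 0 := by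
        rw [← smul_add, smul_mul_assoc, ← hab.mul_self_sub_mul_self_eq, ha, hb, sub_self,
          smul_zero]
      exact hne (sub_eq_zero.mp (hu.mul_right_eq_zero.mp this))
    · have : (-t • a + t • b) * (b + a) = 0 := by
        rw [neg_smul, neg_add_eq_sub, ← smul_sub, smul_mul_assoc,
          ← hab.symm.mul_self_sub_mul_self_eq', ha, hb, sub_self, smul_zero]
      exact hne' (eq_neg_of_add_eq_zero_right (hu.mul_right_eq_zero.mp this))
  · intro hst
    have hunit : IsUnit ((s • a + t • b) * (s • a - t • b)) := by
      rw [smul_add_smul_mul_smul_sub_smul ha hb hab]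
      exact (IsUnit.mk0 _ (sub_ne_zero.mpr hst)).map _
    exact ((commute_smul_add_smul_smul_sub_smul hab s t).isUnit_mul_iff.mp hunit).1

end CommutingInvolutions

section Generators

variable {n : ℕ}

theorem Q_apply (v : EuclideanSpace ℝ (Fin n)) : Q n v = -∑ i, v i ^ 2 := rfl

theorem Q_single (i : Fin n) : Q n (EuclideanSpace.single i 1) = -1 := by
  simp [Q_apply]

theorem e_mul_self (i : Fin n) : e i * e i = -1 := by
  rw [e, CliffordAlgebra.ι_sq_scalar, Q_single, map_neg, map_one]

theorem isOrtho_single {i j : Fin n} (h : i ≠ j) :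
    (Q n).IsOrtho (EuclideanSpace.single i 1) (EuclideanSpace.single j 1) := by
  rw [QuadraticMap.isOrtho_def, Q_single, Q_single, Q_apply]
  simp [PiLp.single_apply, add_sq, Finset.sum_add_distrib, h.symm]

theorem e_mul_e_of_ne {i j : Fin n} (h : i ≠ j) : e i * e j = -(e j * e i) :=
  CliffordAlgebra.ι_mul_ι_comm_of_isOrtho (isOrtho_single h)

theorem e_mul_e_mul_self (i : Fin n) (z : CliffordAlgebra (Q n)) : e i * (e i * z) = -z := by
  rw [← mul_assoc, e_mul_self, neg_one_mul]

theorem e_mul_e_of_lt {i j : Fin n} (h : j < i) : e i * e j = -(e j * e i) :=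
  e_mul_e_of_ne h.ne'

theorem e_mul_e_mul_of_lt {i j : Fin n} (h : j < i) (z : CliffordAlgebra (Q n)) :
    e i * (e j * z) = -(e j * (e i * z)) := by
  rw [← mul_assoc, e_mul_e_of_lt h, neg_mul, mul_assoc]

theorem isUnit_e (i : Fin n) : IsUnit (e i) :=
  have h : e i * -e i = 1 := by rw [mul_neg, e_mul_self, neg_neg]
  isUnit_iff_exists.mpr ⟨-e i, h, by rwa [neg_mul_comm]⟩

instance : CharZero (CliffordAlgebra (Q n)) :=
  charZero_of_injective_algebraMap (algebraMap ℝ _).injective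

end Generators

section N55

local notation "A" => (e 3 * e 0 * e 1 : CliffordAlgebra (Q 5))
local notation "B" => (e 4 * e 0 * e 2 : CliffordAlgebra (Q 5))

theorem A_mul_self : A * A = 1 := by
  simp (disch := decide) only [mul_assoc, e_mul_e_mul_of_lt, e_mul_e_of_lt, e_mul_self,
    mul_neg, neg_mul, neg_neg, mul_one]

theorem B_mul_self : B * B = 1 := by
  simp (disch := decide) only [mul_assoc, e_mul_e_mul_of_lt, e_mul_e_of_lt, e_mul_self,
    mul_neg, neg_mul, neg_neg, mul_one]

theorem commute_A_B : Commute A B := by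
  simp (disch := decide) only [Commute, SemiconjBy, mul_assoc, e_mul_e_mul_of_lt,
    e_mul_e_mul_self, e_mul_e_of_lt, mul_neg, neg_mul, neg_neg]

theorem A_mul_B_mul_e_one : A * B * e 1 = -(e 1 * (A * B)) := by
  simp (disch := decide) only [mul_assoc, e_mul_e_mul_of_lt, e_mul_e_mul_self, e_mul_e_of_lt,
    mul_neg, neg_mul, neg_neg]

theorem A_ne_B : A ≠ B := fun h =>
  ne_one_of_mul_eq_neg_mul (isUnit_e 1) A_mul_B_mul_e_one (by rw [h, B_mul_self])

theorem A_ne_neg_B : A ≠ -B := fun h =>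
  ne_one_of_mul_eq_neg_mul (p := -(A * B)) (isUnit_e 1)
    (by rw [neg_mul, A_mul_B_mul_e_one, mul_neg]) (by rw [h, neg_mul, neg_neg, B_mul_self])

end N55

/-- **The `𝒩₅,₅` case.** In `Cl₅`, `x = μ₁₂ • (e₄e₁e₂) + μ₁₃ • (e₅e₁e₃)` is a unit iff
`μ₁₂² ≠ μ₁₃²`. -/
theorem clifford_N55_dirac (μ₁₂ μ₁₃ : ℝ) (x : CliffordAlgebra (Q 5))
    (hx : x = μ₁₂ • (e (3 : Fin 5) * e 0 * e 1) + μ₁₃ • (e (4 : Fin 5) * e 0 * e 2)) :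
    IsUnit x ↔ μ₁₂ ^ 2 ≠ μ₁₃ ^ 2 := by
  subst hx
  exact isUnit_smul_add_smul_iff A_mul_self B_mul_self commute_A_B A_ne_B A_ne_neg_B μ₁₂ μ₁₃
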